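/- arXiv:2403.13162 — 3 statements merged into one kernel-verified Lean document; each statement's English description precedes it below -/
import Mathlib

section
/- The splay-tree potential Φ(T) = sum over nodes x of log2(sw(x)), where sw(x) is the number of nodes in the subtree rooted at x (all node weights equal to 1), of a perfectly balanced binary tree T with n nodes is at most 2n + O(log^2 n); in particular Φ(T) ≤ 2n + c·(log2 n)^2 for some absolute constant c and all n ≥ 2. -/
/-- Unlabeled binary trees. -/
inductive T where
  | leaf : T
  | node : T → T → T

/-- The perfectly balanced binary tree on `n` nodes, built by the standard
recursive procedure (the root holds the middle element). -/
def build : ℕ → T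
  | 0 => .leaf
  | n + 1 => .node (build (n / 2)) (build (n - n / 2))
decreasing_by all_goals omega

/-- Number of nodes of a tree. -/
def T.size : T → ℕ
  | .leaf => 0
  | .node l r => l.size + 1 + r.size

/-- Height of a tree (a single node has height 1). -/
def T.height : T → ℕ
  | .leaf => 0
  | .node l r => 1 + max l.height r.height

/-- The list of subtrees rooted at (0-based) depth `d'`. -/
def subtreesAt : T → ℕ → List T
  | .leaf, _ => []
  | .node l r, 0 => [.node l r]
  | .node l r, k + 1 => subtreesAt l k ++ subtreesAt r k

/-- The splay-tree potential `Φ(T) = ∑_{x ∈ T} log₂ sw(x)` with unit weights,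
where `sw(x)` is the subtree size of `x`. -/
noncomputable def potential : T → ℝ
  | .leaf => 0
  | .node l r => Real.logb 2 ((T.node l r).size) + potential l + potential r

lemma size_build : ∀ n, (build n).size = n := by
  intro n
  induction n using Nat.strong_induction_on with
  | _ n ih =>
    match n with
    | 0 => simp [build, T.size]
    | m + 1 =>
      rw [build]
      simp only [T.size, ih (m / 2) (by omega), ih (m - m / 2) (by omega)]
      omega

lemma pot_le (n : ℕ) : potential (build n) ≤ 2 * n - Real.logb 2 (n + 1) := by
  induction n using Nat.strong_induction_on with
  | _ n ih =>
    match n with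
    | 0 => simp [build, potential]
    | m + 1 =>
      have ha := ih (m / 2) (by omega)
      have hb := ih (m - m / 2) (by omega)
      rw [build]
      rw [potential]
      have hs : ((T.node (build (m / 2)) (build (m - m / 2))).size : ℝ) = (m : ℝ) + 1 := by
        simp only [T.size, size_build]
        push_cast
        ring_nf
        norm_cast
        omega
      rw [hs]
      -- key log inequality
      set a : ℕ := m / 2 with hadef
      set b : ℕ := m - m / 2 with hbdef
      have hab : a + b = m := by omega
      have hkey : ((m : ℝ) + 1) * ((m : ℝ) + 2) ≤ 4 * ((a : ℝ) + 1) * ((b : ℝ) + 1) := by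
        have h : (m + 1) * (m + 2) ≤ 4 * ((a + 1) * (b + 1)) := by
          rcases Nat.even_or_odd m with ⟨k, hk⟩ | ⟨k, hk⟩
          · have : a = k ∧ b = k := by omega
            nlinarith [this.1, this.2]
          · have : a = k ∧ b = k + 1 := by omega
            nlinarith [this.1, this.2]
        calc ((m : ℝ) + 1) * ((m : ℝ) + 2) = (((m + 1) * (m + 2) : ℕ) : ℝ) := by push_cast; ring
          _ ≤ ((4 * ((a + 1) * (b + 1)) : ℕ) : ℝ) := by exact_mod_cast Nat.cast_le.mpr h
          _ = 4 * ((a : ℝ) + 1) * ((b : ℝ) + 1) := by push_cast; ring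
      have hlog : Real.logb 2 ((m : ℝ) + 1) + Real.logb 2 ((m : ℝ) + 2) ≤
          2 + Real.logb 2 ((a : ℝ) + 1) + Real.logb 2 ((b : ℝ) + 1) := by
        have h1 : (0 : ℝ) < (m : ℝ) + 1 := by positivity
        have h2 : (0 : ℝ) < (m : ℝ) + 2 := by positivity
        have h3 : (0 : ℝ) < (a : ℝ) + 1 := by positivity
        have h4 : (0 : ℝ) < (b : ℝ) + 1 := by positivity
        have hL : Real.logb 2 (((m : ℝ) + 1) * ((m : ℝ) + 2)) =
            Real.logb 2 ((m : ℝ) + 1) + Real.logb 2 ((m : ℝ) + 2) :=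
          Real.logb_mul (ne_of_gt h1) (ne_of_gt h2)
        have hR : Real.logb 2 (4 * ((a : ℝ) + 1) * ((b : ℝ) + 1)) =
            2 + Real.logb 2 ((a : ℝ) + 1) + Real.logb 2 ((b : ℝ) + 1) := by
          rw [Real.logb_mul (by positivity) (ne_of_gt h4),
            Real.logb_mul (by norm_num) (ne_of_gt h3)]
          have h44 : Real.logb 2 4 = 2 := by
            rw [show (4:ℝ) = 2 * 2 by norm_num,
              Real.logb_mul (by norm_num) (by norm_num),
              Real.logb_self_eq_one (by norm_num)]
            norm_num
          rw [h44]
        have hmono : Real.logb 2 (((m : ℝ) + 1) * ((m : ℝ) + 2)) ≤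
            Real.logb 2 (4 * ((a : ℝ) + 1) * ((b : ℝ) + 1)) :=
          Real.logb_le_logb_of_le (by norm_num) (by positivity) hkey
        linarith [hL ▸ hR ▸ hmono]
      have hc : ((m : ℝ)) = (a : ℝ) + (b : ℝ) := by exact_mod_cast hab.symm
      have h12 : ((m : ℝ) + 1 + 1) = (m : ℝ) + 2 := by ring
      push_cast at ha hb ⊢
      rw [h12]
      linarith

/-- The potential of a perfectly balanced binary tree on `n` nodes is at most
`2n + O(log² n)`: there is an absolute constant `c` with
`Φ(T) ≤ 2n + c·(log₂ n)²` for all `n ≥ 2`. -/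
theorem balanced_potential_bound :
    ∃ c : ℝ, ∀ n : ℕ, 2 ≤ n →
      potential (build n) ≤ 2 * (n : ℝ) + c * (Real.logb 2 n) ^ 2 := by
  refine ⟨0, fun n hn => ?_⟩
  have h := pot_le n
  have hlog : 0 ≤ Real.logb 2 ((n : ℝ) + 1) :=
    Real.logb_nonneg (by norm_num) (by
      have : (2:ℝ) ≤ (n:ℝ) := by exact_mod_cast hn
      linarith)
  simp only [zero_mul, add_zero]
  linarith
end

section
/- Let u and v be nonempty strings. If the length of the longest common prefix of the infinite periodic strings u^ω and v^ω is at least |u| + |v| - gcd(|u|,|v|), then u^ω = v^ω; equivalently, both u and v are powers of a common string of length gcd(|u|,|v|). -/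
/-- `k`-fold concatenation of the string `x` with itself. -/
def listPow {α : Type*} (x : List α) (k : ℕ) : List α := (List.replicate k x).flatten

/-- The omega extension `u^ω = u·u·u···` of a nonempty string `u`,
as an infinite string (function on positions, 0-indexed). -/
def omegaExt {α : Type*} [Inhabited α] (u : List α) (i : ℕ) : α :=
  u.getD (i % u.length) default

/-! The common prefix `w` of `u^ω` and `v^ω` of length `|u| + |v| - g`, `g = gcd |u| |v|`, has
periods `|u|` and `|v|`, hence period `g` by the Fine–Wilf theorem for words. As `g` divides
`|u|` and `|v|`, both of which are at most `|w|`, each of `u^ω` and `v^ω` is the `g`-periodic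
extension of the first `g` letters of `w`; so they coincide, and `u`, `v` are powers of that
prefix. -/

open Function

section

variable {α : Type*}

namespace List

theorem hasPeriod_map_range {F : ℕ → α} {L p : ℕ} (h : ∀ i, i + p < L → F (i + p) = F i) :
    ((range L).map F).HasPeriod p := by
  rw [hasPeriod_iff_getElem?]
  intro i hi
  simp only [length_map, length_range] at hi
  simp [show i < L by omega, show i + p < L by omega, h i (by omega)]

theorem HasPeriod.apply_mod_of_map_range {F : ℕ → α} {L p i : ℕ}
    (h : ((range L).map F).HasPeriod p) (hi : i < L) : F (i % p) = F i := by
  simpa [getElem?_range, hi, (Nat.mod_le i p).trans_lt hi] using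
    h.getElem?_mod p i _ (by simpa using hi)

end List

theorem Function.Periodic.fine_wilf {F G : ℕ → α} {m n : ℕ}
    (hF : Periodic F m) (hG : Periodic G n) (hm : 0 < m) (hn : 0 < n)
    (h : ∀ i < m + n - m.gcd n, F i = G i) : F = G ∧ Periodic F (m.gcd n) := by
  have hgm : m.gcd n ≤ m := Nat.gcd_le_left n hm
  have hgn : m.gcd n ≤ n := Nat.gcd_le_right (m := m) hn
  set w := (List.range (m + n - m.gcd n)).map F
  have hwm : w.HasPeriod m := List.hasPeriod_map_range fun i _ => hF i
  have hwn : w.HasPeriod n := List.hasPeriod_map_range fun i hi => by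
    rw [h i (by omega), h (i + n) hi, hG]
  have hwg : w.HasPeriod (m.gcd n) := hwm.gcd hwn (by simp [w])
  have hFg : ∀ i, F (i % m.gcd n) = F i := fun i => calc
    F (i % m.gcd n) = F (i % m % m.gcd n) := by rw [Nat.mod_mod_of_dvd i (Nat.gcd_dvd_left m n)]
    _ = F (i % m) := hwg.apply_mod_of_map_range (by have := Nat.mod_lt i hm; omega)
    _ = F i := hF.map_mod_nat i
  have hFG : F = G := funext fun i => calc
    F i = F (i % n % m.gcd n) := by rw [Nat.mod_mod_of_dvd i (Nat.gcd_dvd_right m n), hFg]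
    _ = F (i % n) := hwg.apply_mod_of_map_range (by have := Nat.mod_lt i hn; omega)
    _ = G (i % n) := h _ (by have := Nat.mod_lt i hn; omega)
    _ = G i := hG.map_mod_nat i
  refine ⟨hFG, fun i => ?_⟩
  rw [← hFg, Nat.add_mod_right, hFg]

theorem length_listPow (x : List α) (k : ℕ) : (listPow x k).length = k * x.length := by
  simp [listPow]

theorem listPow_succ (x : List α) (k : ℕ) : listPow x (k + 1) = x ++ listPow x k := by
  simp [listPow, List.replicate_succ]

theorem getElem?_listPow (x : List α) {k i : ℕ} (hi : i < k * x.length) :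
    (listPow x k)[i]? = x[i % x.length]? := by
  induction k generalizing i with
  | zero => omega
  | succ k ih =>
    rw [listPow_succ]
    rcases lt_or_ge i x.length with hix | hix
    · rw [List.getElem?_append_left hix, Nat.mod_eq_of_lt hix]
    · rw [List.getElem?_append_right hix, ih (by rw [Nat.succ_mul] at hi; omega),
        ← Nat.mod_eq_sub_mod hix]

variable [Inhabited α]

theorem omegaExt_periodic (u : List α) : Periodic (omegaExt u) u.length := by
  simp [Periodic, omegaExt]

theorem omegaExt_of_lt {u : List α} {i : ℕ} (hi : i < u.length) : omegaExt u i = u[i] := by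
  simp [omegaExt, Nat.mod_eq_of_lt hi, hi]

theorem eq_of_omegaExt_eq {u w : List α} (hl : u.length = w.length)
    (h : omegaExt u = omegaExt w) : u = w :=
  List.ext_getElem hl fun i hu hw => by rw [← omegaExt_of_lt hu, h, omegaExt_of_lt hw]

theorem omegaExt_listPow (x : List α) {k : ℕ} (hk : k ≠ 0) :
    omegaExt (listPow x k) = omegaExt x := by
  obtain rfl | hx := eq_or_ne x []
  · simp [listPow]
  funext i
  have hpos : 0 < k * x.length := Nat.mul_pos (Nat.pos_of_ne_zero hk) (List.length_pos_iff.2 hx)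
  rw [omegaExt, omegaExt, List.getD_eq_getElem?_getD, List.getD_eq_getElem?_getD, length_listPow,
    getElem?_listPow x (Nat.mod_lt i hpos), Nat.mod_mod_of_dvd i (Dvd.intro_left k rfl)]

theorem omegaExt_take {u : List α} {p : ℕ} (h : Periodic (omegaExt u) p) (hp : 0 < p)
    (hpu : p ≤ u.length) : omegaExt (u.take p) = omegaExt u := by
  funext i
  have hi : i % p < p := Nat.mod_lt i hp
  rw [← h.map_mod_nat i, omegaExt_of_lt (u := u) (by omega)]
  simp [omegaExt, hpu, hi]

theorem eq_listPow_of_omegaExt_eq {w x : List α} (hx : x.length ∣ w.length)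
    (h : omegaExt w = omegaExt x) : w = listPow x (w.length / x.length) := by
  obtain rfl | hw := eq_or_ne w []
  · simp [listPow]
  have hw0 : 0 < w.length := List.length_pos_iff.2 hw
  have hx0 : 0 < x.length := Nat.pos_of_dvd_of_pos hx hw0
  refine eq_of_omegaExt_eq (by rw [length_listPow, Nat.div_mul_cancel hx]) ?_
  rw [omegaExt_listPow x (Nat.div_pos (Nat.le_of_dvd hw0 hx) hx0).ne', h]

end

/-- If `lcp(u^ω, v^ω) ≥ |u| + |v| - gcd(|u|,|v|)` then `u^ω = v^ω`; equivalently,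
`u` and `v` are powers of a common string of length `gcd(|u|,|v|)`. -/
theorem omega_fine_wilf {α : Type*} [Inhabited α] (u v : List α)
    (hu : u ≠ []) (hv : v ≠ [])
    (h : ∀ i < u.length + v.length - Nat.gcd u.length v.length,
      omegaExt u i = omegaExt v i) :
    (∀ i, omegaExt u i = omegaExt v i) ∧
    ∃ x : List α, x.length = Nat.gcd u.length v.length ∧
      (∃ k, u = listPow x k) ∧ (∃ m, v = listPow x m) := by
  have hm : 0 < u.length := List.length_pos_iff.2 hu
  obtain ⟨huv, hper⟩ :=
    (omegaExt_periodic u).fine_wilf (omegaExt_periodic v) hm (List.length_pos_iff.2 hv) h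
  have hgu : u.length.gcd v.length ≤ u.length := Nat.gcd_le_left _ hm
  have hx := omegaExt_take hper (Nat.gcd_pos_of_pos_left _ hm) hgu
  have hxlen : (u.take (u.length.gcd v.length)).length = u.length.gcd v.length := by simp [hgu]
  refine ⟨congrFun huv, _, hxlen, ⟨_, eq_listPow_of_omegaExt_eq ?_ hx.symm⟩,
    ⟨_, eq_listPow_of_omegaExt_eq ?_ (hx.trans huv).symm⟩⟩ <;> rw [hxlen]
  · exact Nat.gcd_dvd_left _ _
  · exact Nat.gcd_dvd_right _ _
end

section
/- If a finite string w of length n has period r (meaning w[i+r] = w[i] for all 1 ≤ i ≤ n - r) and period q, and n ≥ r + q - gcd(r,q), then w has period gcd(r,q). -/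
/-- A string `w` of length `n` has period `r` if `w[i+r] = w[i]`
for all `1 ≤ i ≤ n - r` (here 0-indexed). -/
def hasPeriod {α : Type*} (w : List α) (r : ℕ) : Prop :=
  ∀ i, ∀ h : i + r < w.length,
    w.get ⟨i + r, h⟩ = w.get ⟨i, Nat.lt_of_le_of_lt (Nat.le_add_right i r) h⟩

private lemma fw_chain {β : Type*} (f : ℕ → β) (g m : ℕ)
    (h : ∀ i, i + g < m → f (i + g) = f i) :
    ∀ k a, a + g * k < m → f (a + g * k) = f a := by
  intro k
  induction k with
  | zero => intro a _; simp
  | succ k ih =>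
    intro a ha
    have h1 : a + g * (k + 1) = (a + g * k) + g := by ring
    rw [h1] at ha ⊢
    rw [h _ ha, ih a (lt_of_le_of_lt (Nat.le_add_right _ _) ha)]

private lemma fw_core {β : Type*} :
    ∀ N r q n (f : ℕ → β), r + q ≤ N →
      (∀ i, i + r < n → f (i + r) = f i) →
      (∀ i, i + q < n → f (i + q) = f i) →
      r + q - Nat.gcd r q ≤ n →
      ∀ i, i + Nat.gcd r q < n → f (i + Nat.gcd r q) = f i := by
  intro N
  induction N with
  | zero =>
    intro r q n f hN hr hq hlen
    have hr0 : r = 0 := by omega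
    have hq0 : q = 0 := by omega
    subst hr0; subst hq0
    simp
  | succ N ih =>
    have key : ∀ r q n (f : ℕ → β), r ≤ q → r + q ≤ N + 1 →
        (∀ i, i + r < n → f (i + r) = f i) →
        (∀ i, i + q < n → f (i + q) = f i) →
        r + q - Nat.gcd r q ≤ n →
        ∀ i, i + Nat.gcd r q < n → f (i + Nat.gcd r q) = f i := by
      intro r q n f hrq hN hr hq hlen
      rcases Nat.eq_zero_or_pos r with h0 | hpos
      · subst h0
        simpa using hq
      rcases eq_or_lt_of_le hrq with heq | hlt
      · subst heq
        simpa [Nat.gcd_self] using hr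
      · set d := q - r with hdd
        have hd : q = r + d := by omega
        have hdpos : 0 < d := by omega
        have hg : Nat.gcd r q = Nat.gcd r d := by
          rw [hd, Nat.gcd_comm, Nat.add_comm, Nat.gcd_add_self_left, Nat.gcd_comm]
        set g := Nat.gcd r d with hgdef
        have hgr : g ∣ r := Nat.gcd_dvd_left _ _
        have hgd : g ∣ d := Nat.gcd_dvd_right _ _
        have hgpos : 0 < g := Nat.gcd_pos_of_pos_left _ hpos
        have hgler : g ≤ r := Nat.le_of_dvd hpos hgr
        have hgled : g ≤ d := Nat.le_of_dvd hdpos hgd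
        rw [hg] at hlen ⊢
        set m := n - r with hm
        have hnr : r ≤ n := by omega
        have hmr : r ≤ m := by omega
        have hr' : ∀ i, i + r < m → f (i + r) = f i := fun i h => hr i (by omega)
        have hd' : ∀ i, i + d < m → f (i + d) = f i := by
          intro i h
          calc f (i + d) = f (i + d + r) := (hr (i + d) (by omega)).symm
            _ = f (i + q) := by rw [show i + d + r = i + q from by omega]
            _ = f i := hq i (by omega)
        have hlen' : r + d - Nat.gcd r d ≤ m := by
          rw [← hgdef]; omega
        have hIH := ih r d m f (by omega) hr' hd' hlen'
        rw [← hgdef] at hIH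
        intro i hi
        obtain ⟨c, hc⟩ := hgr
        have hc1 : 1 ≤ c := by
          rcases Nat.eq_zero_or_pos c with h | h
          · subst h; omega
          · exact h
        have h3 : g * (c - 1) = r - g := by
          rw [Nat.mul_sub, Nat.mul_one, ← hc]
        by_cases h1 : i + g < m
        · exact hIH i h1
        · have hig : r ≤ i + g := by omega
          have e1 : f (i + g) = f (i + g - r) := by
            have := hr (i + g - r) (by omega)
            rw [show i + g - r + r = i + g from by omega] at this
            exact this
          by_cases h2 : i < m
          · have hch := fw_chain f g m hIH (c - 1) (i + g - r) (by rw [h3]; omega)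
            rw [h3] at hch
            rw [show i + g - r + (r - g) = i from by omega] at hch
            rw [e1, ← hch]
          · have e3 : f i = f (i - r) := by
              have := hr (i - r) (by omega)
              rw [show i - r + r = i from by omega] at this
              exact this
            have e4 : f (i - r + g) = f (i - r) := hIH (i - r) (by omega)
            rw [e1, e3, show i + g - r = i - r + g from by omega, e4]
    intro r q n f hN hr hq hlen
    rcases le_total r q with h | h
    · exact key r q n f h hN hr hq hlen
    · intro i hi
      have hc : Nat.gcd r q = Nat.gcd q r := Nat.gcd_comm _ _
      rw [hc] at hi ⊢
      exact key q r n f h (by omega) hq hr (by omega) i hi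

/-- Fine and Wilf periodicity lemma: if `w` has periods `r` and `q` and
`|w| ≥ r + q - gcd(r,q)` then `w` has period `gcd(r,q)`. -/
theorem fine_wilf {α : Type*} (w : List α) (r q : ℕ)
    (hr : hasPeriod w r) (hq : hasPeriod w q)
    (hlen : r + q - Nat.gcd r q ≤ w.length) :
    hasPeriod w (Nat.gcd r q) := by
  set f : ℕ → Option α := fun i => w[i]? with hf
  have hrf : ∀ i, i + r < w.length → f (i + r) = f i := by
    intro i h
    have := hr i h
    simp only [List.get_eq_getElem] at this
    simp [hf, List.getElem?_eq_getElem, h, Nat.lt_of_le_of_lt (Nat.le_add_right i r) h, this]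
  have hqf : ∀ i, i + q < w.length → f (i + q) = f i := by
    intro i h
    have := hq i h
    simp only [List.get_eq_getElem] at this
    simp [hf, List.getElem?_eq_getElem, h, Nat.lt_of_le_of_lt (Nat.le_add_right i q) h, this]
  intro i h
  have := fw_core (r + q) r q w.length f le_rfl hrf hqf hlen i h
  simp only [hf, List.getElem?_eq_getElem, h,
    Nat.lt_of_le_of_lt (Nat.le_add_right i (Nat.gcd r q)) h, Option.some.injEq] at this
  simpa [List.get_eq_getElem] using this
end
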